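/- arXiv:2302.14652 — 4 statements merged into one kernel-verified Lean document; each statement's English description precedes it below -/
import Mathlib

section
/- Let 𝔽_q be a finite field with q elements, let χ and η be non-trivial multiplicative characters of 𝔽_q, let ψ be a non-trivial additive character of 𝔽_q, and let y ∈ 𝔽_q^×. Define B(y) = Σ_{t∈𝔽_q, t≠0, t≠1} χ(t) η(1 − y(1−t)^{−1}) and Hsum(y) = Σ_{x₁,x₂,y₁,y₂ ∈ 𝔽_q^×, x₁x₂ = y·y₁y₂} ψ(x₁+x₂−y₁−y₂) χ̄(y₁) η̄(y₂). Then q² · B(y) = τ(χ,ψ) · τ(η,ψ) · Hsum(y). -/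
open Finset

set_option linter.unusedSectionVars false

section Aux
variable {F : Type*} [Field F] [Fintype F] [DecidableEq F]

private lemma twisted_gauss (χ : MulChar F ℂ) (hχ : χ ≠ 1) (ψ : AddChar F ℂ) (c : F) :
    ∑ u : F, χ⁻¹ u * ψ (c * u) = χ c * gaussSum χ⁻¹ ψ := by
  rcases eq_or_ne c 0 with rfl | hc
  · simp only [zero_mul, AddChar.map_zero_eq_one, mul_one, MulChar.map_zero]
    exact MulChar.sum_eq_zero_of_ne_one (inv_ne_one.mpr hχ)
  · have h := gaussSum_mulShift χ⁻¹ ψ (Units.mk0 c hc)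
    simp only [Units.val_mk0] at h
    have hs : (∑ u : F, χ⁻¹ u * ψ (c * u)) = gaussSum χ⁻¹ (ψ.mulShift c) := by
      simp [gaussSum, AddChar.mulShift_apply]
    have hc' : χ c ≠ 0 := ((isUnit_iff_ne_zero.mpr hc).map χ).ne_zero
    rw [hs, ← h, ← mul_assoc, MulChar.inv_apply_eq_inv', mul_inv_cancel₀ hc', one_mul]

private lemma gauss_inv_mul (χ : MulChar F ℂ) (hχ : χ ≠ 1) (ψ : AddChar F ℂ) (hψ : ψ ≠ 1) :
    gaussSum χ ψ * gaussSum χ⁻¹ ψ = χ (-1) * (Fintype.card F : ℂ) := by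
  have hp : ψ.IsPrimitive := AddChar.IsPrimitive.of_ne_one hψ
  rw [← mul_gaussSum_inv_eq_gaussSum χ⁻¹ ψ, mul_left_comm,
    gaussSum_mul_gaussSum_eq_card hχ hp, MulChar.inv_apply', inv_neg_one]

private lemma key (χ η : MulChar F ℂ) (hχ : χ ≠ 1) (hη : η ≠ 1) (ψ : AddChar F ℂ)
    (y : F) (hy : y ≠ 0) :
    (∑ x₁ : F, ∑ x₂ : F, ∑ y₁ : F, ∑ y₂ : F,
        if x₁ ≠ 0 ∧ x₂ ≠ 0 ∧ y₁ ≠ 0 ∧ y₂ ≠ 0 ∧ x₁ * x₂ = y * (y₁ * y₂) then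
          ψ (x₁ + x₂ - y₁ - y₂) * χ⁻¹ y₁ * η⁻¹ y₂ else 0) =
      gaussSum χ⁻¹ ψ * gaussSum η⁻¹ ψ *
        ∑ a ∈ univ.filter (fun a : F => a ≠ 0), χ (a - 1) * η (y * a⁻¹ - 1) := by
  have step1 : ∀ x₁ y₁ y₂ : F,
      (∑ x₂ : F, if x₁ ≠ 0 ∧ x₂ ≠ 0 ∧ y₁ ≠ 0 ∧ y₂ ≠ 0 ∧ x₁ * x₂ = y * (y₁ * y₂) then
          ψ (x₁ + x₂ - y₁ - y₂) * χ⁻¹ y₁ * η⁻¹ y₂ else 0) =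
      (if x₁ ≠ 0 ∧ y₁ ≠ 0 ∧ y₂ ≠ 0 then
          ψ (x₁ + x₁⁻¹ * (y * (y₁ * y₂)) - y₁ - y₂) * χ⁻¹ y₁ * η⁻¹ y₂ else 0) := by
    intro x₁ y₁ y₂
    by_cases h : x₁ ≠ 0 ∧ y₁ ≠ 0 ∧ y₂ ≠ 0
    · obtain ⟨h1, h3, h4⟩ := h
      rw [if_pos ⟨h1, h3, h4⟩, Finset.sum_eq_single (x₁⁻¹ * (y * (y₁ * y₂)))]
      · rw [if_pos ⟨h1, mul_ne_zero (inv_ne_zero h1) (mul_ne_zero hy (mul_ne_zero h3 h4)),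
          h3, h4, mul_inv_cancel_left₀ h1 _⟩]
      · intro b _ hb
        rw [if_neg]
        rintro ⟨-, -, -, -, heq⟩
        exact hb (by rw [← heq, inv_mul_cancel_left₀ h1])
      · intro hmem; exact absurd (mem_univ _) hmem
    · rw [if_neg h]
      refine Finset.sum_eq_zero fun b _ => ?_
      rw [if_neg]
      rintro ⟨h1, -, h3, h4, -⟩
      exact h ⟨h1, h3, h4⟩
  have step2 : ∀ y₁ y₂ a : F,
      (if y₁ * a ≠ 0 ∧ y₁ ≠ 0 ∧ y₂ ≠ 0 then
          ψ (y₁ * a + (y₁ * a)⁻¹ * (y * (y₁ * y₂)) - y₁ - y₂) * χ⁻¹ y₁ * η⁻¹ y₂ else 0)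
      = (if a ≠ 0 then (χ⁻¹ y₁ * ψ ((a - 1) * y₁)) * (η⁻¹ y₂ * ψ ((y * a⁻¹ - 1) * y₂)) else 0) := by
    intro y₁ y₂ a
    rcases eq_or_ne a 0 with rfl | ha
    · simp
    rcases eq_or_ne y₁ 0 with rfl | h1
    · simp [ha, MulChar.map_zero]
    rcases eq_or_ne y₂ 0 with rfl | h2
    · simp [ha, h1, mul_ne_zero h1 ha, MulChar.map_zero]
    · rw [if_pos ⟨mul_ne_zero h1 ha, h1, h2⟩, if_pos ha]
      have harg : y₁ * a + (y₁ * a)⁻¹ * (y * (y₁ * y₂)) - y₁ - y₂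
          = (a - 1) * y₁ + (y * a⁻¹ - 1) * y₂ := by
        field_simp
        ring
      rw [harg, AddChar.map_add_eq_mul]
      ring
  calc
    (∑ x₁ : F, ∑ x₂ : F, ∑ y₁ : F, ∑ y₂ : F,
        if x₁ ≠ 0 ∧ x₂ ≠ 0 ∧ y₁ ≠ 0 ∧ y₂ ≠ 0 ∧ x₁ * x₂ = y * (y₁ * y₂) then
          ψ (x₁ + x₂ - y₁ - y₂) * χ⁻¹ y₁ * η⁻¹ y₂ else 0)
      = ∑ x₁ : F, ∑ y₁ : F, ∑ y₂ : F, ∑ x₂ : F,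
          (if x₁ ≠ 0 ∧ x₂ ≠ 0 ∧ y₁ ≠ 0 ∧ y₂ ≠ 0 ∧ x₁ * x₂ = y * (y₁ * y₂) then
            ψ (x₁ + x₂ - y₁ - y₂) * χ⁻¹ y₁ * η⁻¹ y₂ else 0) := by
        refine Finset.sum_congr rfl fun x₁ _ => ?_
        rw [Finset.sum_comm]
        exact Finset.sum_congr rfl fun y₁ _ => Finset.sum_comm
    _ = ∑ x₁ : F, ∑ y₁ : F, ∑ y₂ : F,
          (if x₁ ≠ 0 ∧ y₁ ≠ 0 ∧ y₂ ≠ 0 then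
            ψ (x₁ + x₁⁻¹ * (y * (y₁ * y₂)) - y₁ - y₂) * χ⁻¹ y₁ * η⁻¹ y₂ else 0) := by
        exact Finset.sum_congr rfl fun x₁ _ => Finset.sum_congr rfl fun y₁ _ =>
          Finset.sum_congr rfl fun y₂ _ => step1 x₁ y₁ y₂
    _ = ∑ y₁ : F, ∑ y₂ : F, ∑ x₁ : F,
          (if x₁ ≠ 0 ∧ y₁ ≠ 0 ∧ y₂ ≠ 0 then
            ψ (x₁ + x₁⁻¹ * (y * (y₁ * y₂)) - y₁ - y₂) * χ⁻¹ y₁ * η⁻¹ y₂ else 0) := by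
        rw [Finset.sum_comm]
        exact Finset.sum_congr rfl fun y₁ _ => Finset.sum_comm
    _ = ∑ y₁ : F, ∑ y₂ : F, ∑ a : F,
          (if y₁ * a ≠ 0 ∧ y₁ ≠ 0 ∧ y₂ ≠ 0 then
            ψ (y₁ * a + (y₁ * a)⁻¹ * (y * (y₁ * y₂)) - y₁ - y₂) * χ⁻¹ y₁ * η⁻¹ y₂ else 0) := by
        refine Finset.sum_congr rfl fun y₁ _ => Finset.sum_congr rfl fun y₂ _ => ?_
        rcases eq_or_ne y₁ 0 with rfl | h1
        · simp
        · exact (Fintype.sum_bijective (fun a => y₁ * a) (mulLeft_bijective₀ y₁ h1) _ _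
            fun a => rfl).symm
    _ = ∑ y₁ : F, ∑ y₂ : F, ∑ a : F,
          (if a ≠ 0 then (χ⁻¹ y₁ * ψ ((a - 1) * y₁)) * (η⁻¹ y₂ * ψ ((y * a⁻¹ - 1) * y₂))
            else 0) := by
        exact Finset.sum_congr rfl fun y₁ _ => Finset.sum_congr rfl fun y₂ _ =>
          Finset.sum_congr rfl fun a _ => step2 y₁ y₂ a
    _ = ∑ a : F, ∑ y₁ : F, ∑ y₂ : F,
          (if a ≠ 0 then (χ⁻¹ y₁ * ψ ((a - 1) * y₁)) * (η⁻¹ y₂ * ψ ((y * a⁻¹ - 1) * y₂))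
            else 0) := by
        rw [show (∑ y₁ : F, ∑ y₂ : F, ∑ a : F,
            (if a ≠ 0 then (χ⁻¹ y₁ * ψ ((a - 1) * y₁)) * (η⁻¹ y₂ * ψ ((y * a⁻¹ - 1) * y₂))
              else 0)) = ∑ y₁ : F, ∑ a : F, ∑ y₂ : F,
            (if a ≠ 0 then (χ⁻¹ y₁ * ψ ((a - 1) * y₁)) * (η⁻¹ y₂ * ψ ((y * a⁻¹ - 1) * y₂))
              else 0) from Finset.sum_congr rfl fun y₁ _ => Finset.sum_comm]
        exact Finset.sum_comm
    _ = ∑ a : F, (if a ≠ 0 then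
          (∑ y₁ : F, χ⁻¹ y₁ * ψ ((a - 1) * y₁)) * (∑ y₂ : F, η⁻¹ y₂ * ψ ((y * a⁻¹ - 1) * y₂))
          else 0) := by
        refine Finset.sum_congr rfl fun a _ => ?_
        by_cases ha : a ≠ 0
        · simp only [if_pos ha, Finset.sum_mul_sum]
        · simp [ha, MulChar.map_zero]
    _ = ∑ a : F, (if a ≠ 0 then
          (χ (a - 1) * gaussSum χ⁻¹ ψ) * (η (y * a⁻¹ - 1) * gaussSum η⁻¹ ψ) else 0) := by
        refine Finset.sum_congr rfl fun a _ => ?_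
        rw [twisted_gauss χ hχ ψ (a - 1), twisted_gauss η hη ψ (y * a⁻¹ - 1)]
    _ = gaussSum χ⁻¹ ψ * gaussSum η⁻¹ ψ *
          ∑ a ∈ univ.filter (fun a : F => a ≠ 0), χ (a - 1) * η (y * a⁻¹ - 1) := by
        rw [Finset.mul_sum, Finset.sum_filter]
        refine Finset.sum_congr rfl fun a _ => ?_
        split_ifs with h
        · ring
        · rfl

end Aux

/-- For non-trivial multiplicative characters `χ, η` of `F = 𝔽_q`,
a non-trivial additive character `ψ`, and `y ∈ F^×`, with
`B(y) = Σ_{t≠0,1} χ(t) η(1 − y(1−t)⁻¹)` and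
`Hsum(y) = Σ_{x₁x₂ = y·y₁y₂, all in F^×} ψ(x₁+x₂−y₁−y₂) χ̄(y₁) η̄(y₂)`,
one has `q² · B(y) = τ(χ,ψ) · τ(η,ψ) · Hsum(y)`. -/
theorem B_eq_gauss_mul_hypergeometric
    (F : Type*) [Field F] [Fintype F] [DecidableEq F]
    (q : ℕ) (hFq : Fintype.card F = q)
    (χ η : MulChar F ℂ) (hχ : χ ≠ 1) (hη : η ≠ 1)
    (ψ : AddChar F ℂ) (hψ : ψ ≠ 1) (y : F) (hy : y ≠ 0) :
    (q : ℂ) ^ 2 * ∑ t ∈ univ.filter (fun t : F => t ≠ 0 ∧ t ≠ 1),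
        χ t * η (1 - y * (1 - t)⁻¹) =
      gaussSum χ ψ * gaussSum η ψ *
        ∑ x₁ : F, ∑ x₂ : F, ∑ y₁ : F, ∑ y₂ : F,
          if x₁ ≠ 0 ∧ x₂ ≠ 0 ∧ y₁ ≠ 0 ∧ y₂ ≠ 0 ∧ x₁ * x₂ = y * (y₁ * y₂) then
            ψ (x₁ + x₂ - y₁ - y₂) * (starRingEnd ℂ) (χ y₁) * (starRingEnd ℂ) (η y₂)
          else 0 := by
  simp only [starRingEnd_apply, MulChar.star_apply']
  rw [key χ η hχ hη ψ y hy]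
  have h1 : gaussSum χ ψ * gaussSum χ⁻¹ ψ = χ (-1) * (q : ℂ) := by
    rw [gauss_inv_mul χ hχ ψ hψ, hFq]
  have h2 : gaussSum η ψ * gaussSum η⁻¹ ψ = η (-1) * (q : ℂ) := by
    rw [gauss_inv_mul η hη ψ hψ, hFq]
  set S := ∑ a ∈ univ.filter (fun a : F => a ≠ 0), χ (a - 1) * η (y * a⁻¹ - 1) with hS
  rw [show gaussSum χ ψ * gaussSum η ψ * (gaussSum χ⁻¹ ψ * gaussSum η⁻¹ ψ * S)
      = gaussSum χ ψ * gaussSum χ⁻¹ ψ * (gaussSum η ψ * gaussSum η⁻¹ ψ) * S by ring,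
    h1, h2]
  have hB : (∑ t ∈ univ.filter (fun t : F => t ≠ 0 ∧ t ≠ 1), χ t * η (1 - y * (1 - t)⁻¹))
      = ∑ a ∈ univ.filter (fun a : F => a ≠ 0), χ (1 - a) * η (1 - y * a⁻¹) := by
    have hsub : (∑ a ∈ univ.filter (fun a : F => a ≠ 0), χ (1 - a) * η (1 - y * a⁻¹))
        = ∑ a ∈ univ.filter (fun a : F => a ≠ 0 ∧ a ≠ 1), χ (1 - a) * η (1 - y * a⁻¹) := by
      refine (Finset.sum_subset ?_ ?_).symm
      · intro a ha
        simp only [mem_filter, mem_univ, true_and] at ha ⊢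
        exact ha.1
      · intro a ha hna
        simp only [mem_filter, mem_univ, true_and] at ha hna
        have : a = 1 := by tauto
        simp [this, MulChar.map_zero]
    rw [hsub]
    refine Finset.sum_nbij' (fun t => 1 - t) (fun a => 1 - a) ?_ ?_ ?_ ?_ ?_
    · intro t ht
      simp only [mem_filter, mem_univ, true_and] at ht ⊢
      constructor
      · intro h; exact ht.2 (by linear_combination -h)
      · intro h; exact ht.1 (by linear_combination -h)
    · intro a ha
      simp only [mem_filter, mem_univ, true_and] at ha ⊢
      constructor
      · intro h; exact ha.2 (by linear_combination -h)
      · intro h; exact ha.1 (by linear_combination -h)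
    · intro t _; ring
    · intro a _; ring
    · intro t _
      have : 1 - (1 - t) = t := by ring
      rw [this]
  rw [hB]
  have hsq : ∀ ξ : MulChar F ℂ, ξ (-1) * ξ (-1) = 1 := by
    intro ξ
    rw [← map_mul, neg_mul_neg, one_mul, map_one]
  rw [show χ (-1) * (q : ℂ) * (η (-1) * (q : ℂ)) * S = (q : ℂ) ^ 2 * (χ (-1) * η (-1) * S) by
    ring]
  congr 1
  rw [hS, Finset.mul_sum]
  refine Finset.sum_congr rfl fun a _ => ?_
  have c1 : χ (1 - a) = χ (-1) * χ (a - 1) := by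
    rw [← map_mul, neg_one_mul, neg_sub]
  have c2 : η (1 - y * a⁻¹) = η (-1) * η (y * a⁻¹ - 1) := by
    rw [← map_mul, neg_one_mul, neg_sub]
  rw [c1, c2]
  ring
end

section
/- Let 𝔽_q be a finite field with q elements, let χ and η be multiplicative characters of 𝔽_q, and let y ∈ 𝔽_q^×. Define B(y) = Σ_{t∈𝔽_q, t≠0, t≠1} χ(t) η(1 − y(1−t)^{−1}). Then (q−1) · B(y) = Σ_ξ ξ(y)^{−1} J(ξ,χ) J(ξ,η), where the sum runs over all multiplicative characters ξ of 𝔽_q. -/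
open Finset

lemma sum_mulChar_apply (F : Type*) [Field F] [Fintype F] [DecidableEq F]
    [Fintype (MulChar F ℂ)] (q : ℕ) (hFq : Fintype.card F = q) (a : F) :
    ∑ ξ : MulChar F ℂ, ξ a = if a = 1 then ((q:ℂ)-1) else 0 := by
  have hne : NeZero (Monoid.exponent Fˣ) := ⟨Monoid.exponent_ne_zero_of_finite⟩
  have hcard : (Fintype.card (MulChar F ℂ) : ℂ) = (q : ℂ) - 1 := by
    have h1 := MulChar.card_eq_card_units_of_hasEnoughRootsOfUnity F ℂ
    rw [Nat.card_eq_fintype_card, Nat.card_eq_fintype_card, Fintype.card_units, hFq] at h1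
    rw [h1]
    have : 1 ≤ q := hFq ▸ Fintype.card_pos
    push_cast [Nat.cast_sub this]
    ring
  split_ifs with h
  · simp [h, hcard]
  · rcases eq_or_ne a 0 with rfl | ha
    · simp [MulChar.map_nonunit _ (not_isUnit_zero (M₀ := F))]
    · obtain ⟨χ₀, hχ₀⟩ := MulChar.exists_apply_ne_one_of_hasEnoughRootsOfUnity F ℂ h
      refine eq_zero_of_mul_eq_self_left hχ₀ ?_
      simp only [Finset.mul_sum, ← MulChar.mul_apply]
      exact Fintype.sum_bijective _ (Group.mulLeft_bijective χ₀) _ _ fun χ' ↦ rfl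

/-- For multiplicative characters `χ, η` of `F = 𝔽_q` and `y ∈ F^×`, with
`B(y) = Σ_{t≠0,1} χ(t) η(1 − y(1−t)⁻¹)`, one has
`(q−1) · B(y) = Σ_ξ ξ(y)⁻¹ J(ξ,χ) J(ξ,η)`, the sum running over all multiplicative
characters `ξ` of `F` (a finite collection; we use `finsum`). -/
theorem B_eq_sum_of_jacobiSums
    (F : Type*) [Field F] [Fintype F] [DecidableEq F]
    (q : ℕ) (hFq : Fintype.card F = q)
    (χ η : MulChar F ℂ) (y : F) (hy : y ≠ 0) :
    ((q : ℂ) - 1) * ∑ t ∈ univ.filter (fun t : F => t ≠ 0 ∧ t ≠ 1),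
        χ t * η (1 - y * (1 - t)⁻¹) =
      ∑ᶠ ξ : MulChar F ℂ,
        (ξ y)⁻¹ * (∑ α : F, ξ α * χ (1 - α)) * (∑ α : F, ξ α * η (1 - α)) := by
  classical
  have : Fintype (MulChar F ℂ) := Fintype.ofFinite _
  rw [finsum_eq_sum_of_fintype]
  -- rewrite (ξ y)⁻¹ as ξ y⁻¹
  have hinv : ∀ ξ : MulChar F ℂ, (ξ y)⁻¹ = ξ y⁻¹ := by
    intro ξ
    symm
    refine eq_inv_of_mul_eq_one_left ?_
    rw [← map_mul, inv_mul_cancel₀ hy, map_one]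
  -- RHS = Σ_α Σ_β χ(1-α)η(1-β) * Σ_ξ ξ(y⁻¹αβ)
  have step1 : ∑ ξ : MulChar F ℂ,
        (ξ y)⁻¹ * (∑ α : F, ξ α * χ (1 - α)) * (∑ α : F, ξ α * η (1 - α)) =
      ∑ α : F, ∑ β : F, χ (1 - α) * η (1 - β) *
        (if y⁻¹ * α * β = 1 then ((q:ℂ)-1) else 0) := by
    have : ∀ ξ : MulChar F ℂ,
        (ξ y)⁻¹ * (∑ α : F, ξ α * χ (1 - α)) * (∑ α : F, ξ α * η (1 - α)) =
        ∑ α : F, ∑ β : F, χ (1 - α) * η (1 - β) * ξ (y⁻¹ * α * β) := by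
      intro ξ
      rw [hinv]
      simp only [Finset.mul_sum, Finset.sum_mul]
      rw [Finset.sum_comm]
      refine Finset.sum_congr rfl fun α _ => Finset.sum_congr rfl fun β _ => ?_
      rw [map_mul, map_mul]
      ring
    rw [Finset.sum_congr rfl fun ξ _ => this ξ, Finset.sum_comm]
    refine Finset.sum_congr rfl fun α _ => ?_
    rw [Finset.sum_comm]
    refine Finset.sum_congr rfl fun β _ => ?_
    rw [← Finset.mul_sum, sum_mulChar_apply F q hFq]
  rw [step1]
  -- inner β sum
  have step2 : ∀ α : F, (∑ β : F, χ (1 - α) * η (1 - β) *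
        (if y⁻¹ * α * β = 1 then ((q:ℂ)-1) else 0)) =
      if α ≠ 0 then ((q:ℂ)-1) * (χ (1 - α) * η (1 - y * α⁻¹)) else 0 := by
    intro α
    rcases eq_or_ne α 0 with rfl | ha
    · simp
    · rw [if_pos ha]
      rw [Finset.sum_eq_single (y * α⁻¹)]
      · have : y⁻¹ * α * (y * α⁻¹) = 1 := by field_simp
        rw [if_pos this]; ring
      · intro b _ hb
        have : y⁻¹ * α * b ≠ 1 := by
          intro h
          apply hb
          field_simp at h ⊢
          linear_combination h
        rw [if_neg this, mul_zero]
      · intro h; exact absurd (Finset.mem_univ _) h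
  rw [Finset.sum_congr rfl fun α _ => step2 α]
  rw [Finset.sum_ite, Finset.sum_const_zero, add_zero, ← Finset.mul_sum]
  congr 1
  -- now Σ_{t≠0,1} χ t η(1-y(1-t)⁻¹) = Σ_{α≠0} χ(1-α) η(1-yα⁻¹)
  have h1 : (univ.filter (fun α : F => ¬α = 0)) =
      insert 1 (univ.filter (fun α : F => α ≠ 0 ∧ α ≠ 1)) := by
    ext x
    simp only [Finset.mem_insert, Finset.mem_filter, Finset.mem_univ, true_and]
    constructor
    · intro hx; rcases eq_or_ne x 1 with rfl | h; · left; rfl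
      · right; exact ⟨hx, h⟩
    · rintro (rfl | ⟨h, _⟩); · exact one_ne_zero
      · exact h
  rw [h1, Finset.sum_insert (by simp)]
  have h0 : χ (1 - 1) * η (1 - y * 1⁻¹) = 0 := by
    rw [sub_self, MulChar.map_nonunit χ (not_isUnit_zero (M₀ := F)), zero_mul]
  rw [h0, zero_add]
  refine Finset.sum_nbij' (fun t => 1 - t) (fun α => 1 - α) ?_ ?_ ?_ ?_ ?_
  · intro t ht
    simp only [Finset.mem_filter, Finset.mem_univ, true_and] at ht ⊢
    exact ⟨fun h => ht.2 (by linear_combination -h), fun h => ht.1 (by linear_combination -h)⟩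
  · intro a ha
    simp only [Finset.mem_filter, Finset.mem_univ, true_and] at ha ⊢
    exact ⟨fun h => ha.2 (by linear_combination -h), fun h => ha.1 (by linear_combination -h)⟩
  · intro t _; ring
  · intro a _; ring
  · intro t _
    have h2 : (1 : F) - (1 - t) = t := by ring
    rw [h2]
end

section
/- Let q be an odd prime power, 𝔽_q a finite field with q elements and 𝔽_{q²} a quadratic extension of 𝔽_q. Let ω ∈ 𝔽_{q²} \ 𝔽_q satisfy ω² ∈ 𝔽_q. Let χ and η be non-trivial multiplicative characters of 𝔽_q, let ψ be a non-trivial additive character of 𝔽_q, and let ρ be a multiplicative character of 𝔽_{q²}. Define S(χ,η;ρ) = Σ_{α∈𝔽_q} ρ(α+ω) Σ_{t∈𝔽_q} χ(t) η(α²−ω²t) η̄(1−t), and for t ∈ 𝔽_q set Hsum(t) = Σ_{x₁,x₂,y₁,y₂ ∈ 𝔽_q^×, x₁x₂ = t·y₁y₂} ψ(x₁+x₂−y₁−y₂) χ̄(y₁) η̄(y₂). Then q² · S(χ,η;ρ) = η(ω²) · τ(χ,ψ) · τ(η,ψ) · Σ_{α∈𝔽_q} ρ(α+ω) Hsum(1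 − α²ω^{−2}). -/
/-!
For `t ≠ 0` and fixed `y₁, y₂ ≠ 0`, the solutions of `x₁ x₂ = t y₁ y₂` are
`x₁ = (1 - u) y₁`, `x₂ = t y₂ / (1 - u)` with `u ≠ 1`. In these coordinates the phase
`x₁ + x₂ - y₁ - y₂` is linear in `y₁` and in `y₂`, so `Hsum(t)` factors into twisted Gauss sums:
`Hsum(t) = τ(χ̄, ψ̄) τ(η̄, ψ̄) Σ_u χ(u) η(1 - t - u) η̄(1 - u)`.
Since `ω²` is not a square in `𝔽_q`, `t = 1 - α² ω⁻²` is never `0`, and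
`τ(χ, ψ) τ(χ̄, ψ̄) = q` then turns this into the theorem, one `α` at a time.
-/

open Finset

section HypergeometricSum

variable {F R : Type*} [Field F] [Fintype F] [CommRing R]

theorem sum_mulChar_mul_addChar_mul [IsDomain R] {χ : MulChar F R} (hχ : χ ≠ 1)
    (ψ : AddChar F R) (c : F) :
    ∑ y, χ y * ψ (c * y) = χ⁻¹ c * gaussSum χ ψ := by
  rcases eq_or_ne c 0 with rfl | hc
  · simp [MulChar.sum_eq_zero_of_ne_one hχ, MulChar.map_zero]
  · simpa [gaussSum] using gaussSum_mulShift_eq χ ψ (Units.mk0 c hc)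

variable [DecidableEq F]

theorem sum_erase_zero_eq_sum_erase_one {M : Type*} [AddCommMonoid M]
    {a : F} (ha : a ≠ 0) (f : F → M) :
    ∑ x ∈ univ.erase 0, f x = ∑ u ∈ univ.erase 1, f ((1 - u) * a) := by
  let e : F ≃ F := (Equiv.subLeft 1).trans (Equiv.mulRight₀ a ha)
  refine (sum_equiv e (fun u => ?_) fun _ _ => rfl).symm
  simp [e, ha, sub_eq_zero, eq_comm (b := u)]

/-- The paper's `Hsum(t)` is `hypergeometricSum ψ χ⁻¹ η⁻¹ t`. -/
def hypergeometricSum (ψ : AddChar F R) (μ ν : MulChar F R) (t : F) : R :=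
  ∑ x₁ : F, ∑ x₂ : F, ∑ y₁ : F, ∑ y₂ : F,
    if x₁ ≠ 0 ∧ x₂ ≠ 0 ∧ y₁ ≠ 0 ∧ y₂ ≠ 0 ∧ x₁ * x₂ = t * (y₁ * y₂) then
      ψ (x₁ + x₂ - y₁ - y₂) * μ y₁ * ν y₂
    else 0

theorem hypergeometricSum_eq_sum_erase_zero [Nontrivial R] (ψ : AddChar F R)
    (μ ν : MulChar F R) {t : F} (ht : t ≠ 0) :
    hypergeometricSum ψ μ ν t =
      ∑ x ∈ univ.erase 0, ∑ y₁, ∑ y₂, ψ (x + t * y₁ * y₂ / x - y₁ - y₂) * μ y₁ * ν y₂ := by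
  rw [← filter_ne', sum_filter, hypergeometricSum]
  refine sum_congr rfl fun x₁ _ => ?_
  rw [sum_comm]
  rcases eq_or_ne x₁ 0 with rfl | hx₁
  · simp
  rw [if_pos hx₁]
  refine sum_congr rfl fun y₁ _ => ?_
  rw [sum_comm]
  refine sum_congr rfl fun y₂ _ => ?_
  rcases eq_or_ne y₁ 0 with rfl | hy₁
  · simp [MulChar.map_zero]
  rcases eq_or_ne y₂ 0 with rfl | hy₂
  · simp [MulChar.map_zero]
  rw [sum_eq_single (t * y₁ * y₂ / x₁)]
  · rw [if_pos ⟨hx₁, by simp [*], hy₁, hy₂, by field_simp⟩]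
  · rintro x₂ - hx₂
    rw [if_neg]
    rintro ⟨-, -, -, -, h⟩
    exact hx₂ (by field_simp; linear_combination h)
  · simp

theorem hypergeometricSum_eq [IsDomain R] {μ ν : MulChar F R} (hμ : μ ≠ 1) (hν : ν ≠ 1)
    (ψ : AddChar F R) {t : F} (ht : t ≠ 0) :
    hypergeometricSum ψ μ ν t =
      gaussSum μ ψ⁻¹ * gaussSum ν ψ⁻¹ * ∑ u, μ⁻¹ u * ν⁻¹ (1 - t - u) * ν (1 - u) := by
  have hsubst : ∀ y₁ y₂ : F,
      ∑ x ∈ univ.erase 0, ψ (x + t * y₁ * y₂ / x - y₁ - y₂) * μ y₁ * ν y₂ =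
        ∑ u ∈ univ.erase 1,
          μ y₁ * ψ⁻¹ (u * y₁) * (ν y₂ * ψ⁻¹ ((1 - t - u) / (1 - u) * y₂)) := by
    intro y₁ y₂
    rcases eq_or_ne y₁ 0 with rfl | hy₁
    · simp [MulChar.map_zero]
    rw [sum_erase_zero_eq_sum_erase_one hy₁]
    refine sum_congr rfl fun u hu => ?_
    have hu : 1 - u ≠ 0 := sub_ne_zero.mpr (ne_of_mem_erase hu).symm
    have hexp : (1 - u) * y₁ + t * y₁ * y₂ / ((1 - u) * y₁) - y₁ - y₂ =
        -(u * y₁ + (1 - t - u) / (1 - u) * y₂) := by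
      field_simp
      ring
    rw [hexp, ← AddChar.inv_apply, AddChar.map_add_eq_mul]
    ring
  calc hypergeometricSum ψ μ ν t
      = ∑ y₁, ∑ y₂, ∑ x ∈ univ.erase 0, ψ (x + t * y₁ * y₂ / x - y₁ - y₂) * μ y₁ * ν y₂ := by
        rw [hypergeometricSum_eq_sum_erase_zero ψ μ ν ht, sum_comm]
        exact sum_congr rfl fun _ _ => sum_comm
    _ = ∑ u ∈ univ.erase 1, (∑ y₁, μ y₁ * ψ⁻¹ (u * y₁)) *
          ∑ y₂, ν y₂ * ψ⁻¹ ((1 - t - u) / (1 - u) * y₂) := by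
        simp_rw [hsubst, sum_mul_sum]
        exact (sum_congr rfl fun _ _ => sum_comm).trans sum_comm
    _ = ∑ u ∈ univ.erase 1,
          gaussSum μ ψ⁻¹ * gaussSum ν ψ⁻¹ * (μ⁻¹ u * ν⁻¹ (1 - t - u) * ν (1 - u)) := by
        refine sum_congr rfl fun u _ => ?_
        rw [sum_mulChar_mul_addChar_mul hμ, sum_mulChar_mul_addChar_mul hν, div_eq_mul_inv,
          map_mul, MulChar.inv_apply' ν (1 - u)⁻¹, inv_inv]
        ring
    _ = _ := by rw [← mul_sum, sum_erase _ (by simp [MulChar.map_zero])]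

end HypergeometricSum

theorem sq_ne_of_algebraMap_eq_sq {F E : Type*} [Field F] [Field E] [Algebra F E] {ω : E}
    (hω : ω ∉ Set.range (algebraMap F E)) {w : F} (hw : algebraMap F E w = ω ^ 2) (α : F) :
    α ^ 2 ≠ w := by
  rintro rfl
  rw [map_pow] at hw
  rcases sq_eq_sq_iff_eq_or_eq_neg.mp hw with h | h
  · exact hω ⟨α, h⟩
  · exact hω ⟨-α, by rw [map_neg, h, neg_neg]⟩

theorem S_eq_gauss_mul_twisted_hypergeometric_general
    (F E : Type*) [Field F] [Fintype F] [DecidableEq F] [Field E] [Algebra F E]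
    (q : ℕ) (hFq : Fintype.card F = q)
    (ω : E) (hω : ω ∉ Set.range (algebraMap F E)) (w2 : F) (hw2 : algebraMap F E w2 = ω ^ 2)
    (χ η : MulChar F ℂ) (hχ : χ ≠ 1) (hη : η ≠ 1)
    (ψ : AddChar F ℂ) (hψ : ψ ≠ 1) (ρ : MulChar E ℂ) :
    (q : ℂ) ^ 2 * ∑ α : F, ρ (algebraMap F E α + ω) *
        ∑ t : F, χ t * η (α ^ 2 - w2 * t) * (starRingEnd ℂ) (η (1 - t)) =
      η w2 * gaussSum χ ψ * gaussSum η ψ *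
        ∑ α : F, ρ (algebraMap F E α + ω) *
          ∑ x₁ : F, ∑ x₂ : F, ∑ y₁ : F, ∑ y₂ : F,
            if x₁ ≠ 0 ∧ x₂ ≠ 0 ∧ y₁ ≠ 0 ∧ y₂ ≠ 0 ∧
                x₁ * x₂ = (1 - α ^ 2 * w2⁻¹) * (y₁ * y₂) then
              ψ (x₁ + x₂ - y₁ - y₂) * (starRingEnd ℂ) (χ y₁) * (starRingEnd ℂ) (η y₂)
            else 0 := by
  have hw0 : w2 ≠ 0 := by simpa [eq_comm] using sq_ne_of_algebraMap_eq_sq hω hw2 0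
  have hcard : (q : ℂ) ^ 2 =
      gaussSum χ ψ * gaussSum χ⁻¹ ψ⁻¹ * (gaussSum η ψ * gaussSum η⁻¹ ψ⁻¹) := by
    rw [gaussSum_mul_gaussSum_eq_card hχ (.of_ne_one hψ),
      gaussSum_mul_gaussSum_eq_card hη (.of_ne_one hψ), hFq, sq]
  simp only [starRingEnd_apply, MulChar.star_apply']
  rw [mul_sum, mul_sum]
  refine sum_congr rfl fun α _ => ?_
  have ht : 1 - α ^ 2 * w2⁻¹ ≠ 0 := by
    rw [sub_ne_zero, ne_comm, ← div_eq_mul_inv, ne_eq, div_eq_one_iff_eq hw0]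
    exact sq_ne_of_algebraMap_eq_sq hω hw2 α
  have hη_scale : ∀ u, η (α ^ 2 - w2 * u) = η w2 * η (α ^ 2 * w2⁻¹ - u) := fun u => by
    rw [← map_mul]
    field_simp
  change _ = _ * (_ * hypergeometricSum ψ χ⁻¹ η⁻¹ (1 - α ^ 2 * w2⁻¹))
  rw [hypergeometricSum_eq (inv_ne_one.mpr hχ) (inv_ne_one.mpr hη) ψ ht, hcard, sub_sub_cancel]
  simp_rw [inv_inv, hη_scale, mul_sum]
  refine sum_congr rfl fun u _ => ?_
  ring

/-- Let `q` be an odd prime power, `F = 𝔽_q`, `E = 𝔽_{q²}` a quadratic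
extension, `ω ∈ E \ F` with `ω² ∈ F` (witnessed by `w2 : F`). Let `χ, η` be non-trivial
multiplicative characters of `F`, `ψ` a non-trivial additive character of `F` and `ρ` a
multiplicative character of `E`. With
`S(χ,η;ρ) = Σ_α ρ(α+ω) Σ_t χ(t) η(α²−ω²t) η̄(1−t)` and
`Hsum(t) = Σ_{x₁x₂ = t·y₁y₂, all in F^×} ψ(x₁+x₂−y₁−y₂) χ̄(y₁) η̄(y₂)`, one has
`q² · S(χ,η;ρ) = η(ω²) · τ(χ,ψ) · τ(η,ψ) · Σ_α ρ(α+ω) Hsum(1 − α²ω⁻²)`. -/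
theorem S_eq_gauss_mul_twisted_hypergeometric
    (F E : Type*) [Field F] [Fintype F] [DecidableEq F] [Field E] [Fintype E] [Algebra F E]
    (q : ℕ) (hq : Odd q) (hFq : Fintype.card F = q) (hEq : Fintype.card E = q ^ 2)
    (ω : E) (hω : ω ∉ Set.range (algebraMap F E)) (w2 : F) (hw2 : algebraMap F E w2 = ω ^ 2)
    (χ η : MulChar F ℂ) (hχ : χ ≠ 1) (hη : η ≠ 1)
    (ψ : AddChar F ℂ) (hψ : ψ ≠ 1) (ρ : MulChar E ℂ) :
    (q : ℂ) ^ 2 * ∑ α : F, ρ (algebraMap F E α + ω) *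
        ∑ t : F, χ t * η (α ^ 2 - w2 * t) * (starRingEnd ℂ) (η (1 - t)) =
      η w2 * gaussSum χ ψ * gaussSum η ψ *
        ∑ α : F, ρ (algebraMap F E α + ω) *
          ∑ x₁ : F, ∑ x₂ : F, ∑ y₁ : F, ∑ y₂ : F,
            if x₁ ≠ 0 ∧ x₂ ≠ 0 ∧ y₁ ≠ 0 ∧ y₂ ≠ 0 ∧
                x₁ * x₂ = (1 - α ^ 2 * w2⁻¹) * (y₁ * y₂) then
              ψ (x₁ + x₂ - y₁ - y₂) * (starRingEnd ℂ) (χ y₁) * (starRingEnd ℂ) (η y₂)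
            else 0 :=
  S_eq_gauss_mul_twisted_hypergeometric_general F E q hFq ω hω w2 hw2 χ η hχ hη ψ hψ ρ
end

section
/- Let 𝔽_q be a finite field with q elements and 𝔽_{q²} a quadratic extension of 𝔽_q. Let θ be a multiplicative character of 𝔽_{q²} that is trivial on 𝔽_q^× but non-trivial on 𝔽_{q²}^×, and let ω ∈ 𝔽_{q²} \ 𝔽_q. Then Σ_{x∈𝔽_q} θ(x+ω) = −1. -/
/-!
The sum of a nontrivial character over `E` vanishes. Writing `E = F ⊕ F ω`, the terms with
`ω`-coordinate `0` contribute `q - 1` since `θ` is trivial on `F^×`, and, factoring out the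
`ω`-coordinate `b ≠ 0` of `a + b ω = b (a / b + ω)`, each of the other `q - 1` rows contributes
`∑ x, θ (x + ω)`. Hence `(q - 1) (1 + ∑ x, θ (x + ω)) = 0`.
-/

open Finset

section Basis

variable {F E : Type*} [Field F] [Field E] [Algebra F E]

theorem injective_algebraMap_add_mul {ω : E} (hω : ω ∉ Set.range (algebraMap F E)) :
    Function.Injective fun p : F × F => algebraMap F E p.1 + algebraMap F E p.2 * ω := by
  rintro ⟨a, b⟩ ⟨a', b'⟩ h
  simp only at h
  obtain rfl : b = b' := by
    by_contra hb
    refine hω ⟨(a' - a) / (b - b'), ?_⟩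
    have : algebraMap F E (b - b') ≠ 0 := by simpa [sub_eq_zero] using hb
    rw [map_div₀, div_eq_iff this, map_sub, map_sub]
    linear_combination -h
  simpa using h

theorem bijective_algebraMap_add_mul [Fintype F] [Fintype E]
    (hcard : Fintype.card E = Fintype.card F ^ 2) {ω : E}
    (hω : ω ∉ Set.range (algebraMap F E)) :
    Function.Bijective fun p : F × F => algebraMap F E p.1 + algebraMap F E p.2 * ω :=
  (Fintype.bijective_iff_injective_and_card _).2
    ⟨injective_algebraMap_add_mul hω, by rw [hcard, Fintype.card_prod, sq]⟩

end Basis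

namespace MulChar

variable {F E R : Type*} [Field F] [Fintype F] [Field E] [Algebra F E] [CommRing R]
  {θ : MulChar E R}

theorem sum_algebraMap_of_trivial
    (hθ : ∀ x : F, x ≠ 0 → θ (algebraMap F E x) = 1) :
    ∑ x : F, θ (algebraMap F E x) = Fintype.card F - 1 := by
  classical
  rw [← Finset.add_sum_erase _ _ (mem_univ 0), map_zero, θ.map_zero, zero_add,
    Finset.sum_congr rfl fun x hx => hθ x (ne_of_mem_erase hx), sum_const,
    card_erase_of_mem (mem_univ 0), card_univ, nsmul_one, Nat.cast_pred Fintype.card_pos]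

theorem sum_algebraMap_add_mul_of_trivial (hθ : ∀ x : F, x ≠ 0 → θ (algebraMap F E x) = 1)
    (ω : E) {b : F} (hb : b ≠ 0) :
    ∑ a : F, θ (algebraMap F E a + algebraMap F E b * ω) = ∑ x : F, θ (algebraMap F E x + ω) := by
  refine (Fintype.sum_bijective _ (mulRight_bijective₀ b hb) _ _ fun x => ?_).symm
  rw [map_mul, mul_comm, ← mul_add, map_mul, hθ b hb, one_mul]

theorem sum_sum_algebraMap_add_mul_of_trivial
    (hθ : ∀ x : F, x ≠ 0 → θ (algebraMap F E x) = 1) (ω : E) :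
    ∑ b : F, ∑ a : F, θ (algebraMap F E a + algebraMap F E b * ω) =
      (Fintype.card F - 1) * (1 + ∑ x : F, θ (algebraMap F E x + ω)) := by
  classical
  rw [← Finset.add_sum_erase _ _ (mem_univ 0),
    Finset.sum_congr rfl fun b hb => sum_algebraMap_add_mul_of_trivial hθ ω (ne_of_mem_erase hb),
    sum_const, card_erase_of_mem (mem_univ 0), card_univ, nsmul_eq_mul,
    Nat.cast_pred Fintype.card_pos]
  simp only [map_zero, zero_mul, add_zero]
  rw [sum_algebraMap_of_trivial hθ]
  ring

end MulChar

/-- Let `F = 𝔽_q` and `E = 𝔽_{q²}` a quadratic extension. Let `θ` be a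
multiplicative character of `E` which is trivial on `F^×` but non-trivial on `E^×`, and let
`ω ∈ E \ F`. Then `Σ_{x ∈ F} θ(x+ω) = −1`. -/
theorem sum_theta_shift_eq_neg_one
    (F E : Type*) [Field F] [Fintype F] [Field E] [Fintype E] [Algebra F E]
    (q : ℕ) (hFq : Fintype.card F = q) (hEq : Fintype.card E = q ^ 2)
    (θ : MulChar E ℂ) (hθtriv : ∀ x : F, x ≠ 0 → θ (algebraMap F E x) = 1) (hθ : θ ≠ 1)
    (ω : E) (hω : ω ∉ Set.range (algebraMap F E)) :
    ∑ x : F, θ (algebraMap F E x + ω) = -1 := by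
  have hcard : Fintype.card E = Fintype.card F ^ 2 := by rw [hEq, hFq]
  have hsum : ((Fintype.card F : ℂ) - 1) * (1 + ∑ x : F, θ (algebraMap F E x + ω)) = 0 := by
    rw [← θ.sum_sum_algebraMap_add_mul_of_trivial hθtriv, ← Fintype.sum_prod_type_right',
      (bijective_algebraMap_add_mul hcard hω).sum_comp θ, MulChar.sum_eq_zero_of_ne_one hθ]
  have hq : (Fintype.card F : ℂ) - 1 ≠ 0 := by
    rw [sub_ne_zero]
    exact_mod_cast Fintype.one_lt_card.ne'
  linear_combination (mul_eq_zero.mp hsum).resolve_left hq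
end
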